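/- arXiv:2512.19619 — 2 statements merged into one kernel-verified Lean document; each statement's English description precedes it below -/
import Mathlib

section
/- For every complex number z with 0 < |z| < 1, one has π·cot(πz) = 1/z + Σ_{k=1}^∞ 2z/(z² − k²), where the series converges absolutely. -/
open Complex Real

/-- The complex cotangent. -/
noncomputable def ccot (z : ℂ) : ℂ := Complex.cos z / Complex.sin z

lemma Complex.mem_integerComplement_of_norm_lt_one {x : ℂ} (h0 : x ≠ 0) (h1 : ‖x‖ < 1) :
    x ∈ integerComplement := by
  rintro ⟨n, rfl⟩
  rw [norm_intCast] at h1
  have hn : |n| < 1 := by exact_mod_cast h1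
  exact h0 (by simp [Int.abs_lt_one_iff.mp hn])

lemma cotTerm_eq_two_mul_div {x : ℂ} (hx : x ∈ integerComplement) (n : ℕ) :
    cotTerm x n = 2 * x / (x ^ 2 - ((n : ℂ) + 1) ^ 2) := by
  rw [cotTerm_identity hx]
  ring

/-- Mittag-Leffler / partial fraction expansion of the cotangent on the punctured
unit disk: `π cot (π z) = 1/z + ∑_{k ≥ 1} 2z/(z² − k²)`, with absolute convergence. -/
theorem cot_partial_fraction_expansion (z : ℂ) (hz0 : 0 < ‖z‖)
    (hz1 : ‖z‖ < 1) :
    Summable (fun k : ℕ => ‖2 * z / (z ^ 2 - ((k : ℂ) + 1) ^ 2)‖) ∧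
    (π : ℂ) * ccot ((π : ℂ) * z) =
      1 / z + ∑' k : ℕ, 2 * z / (z ^ 2 - ((k : ℂ) + 1) ^ 2) := by
  have hz : z ∈ integerComplement :=
    mem_integerComplement_of_norm_lt_one (norm_pos_iff.mp hz0) hz1
  simp_rw [← cotTerm_eq_two_mul_div hz]
  refine ⟨summable_norm_iff.mpr (summable_cotTerm hz), ?_⟩
  rw [← cot_series_rep' hz, add_sub_cancel]
  rfl
end

section
/- Fix T > 0 and ρ with 0 < |ρ| < T/2. For the operator (𝒞^ρ φ)(τ) = (1/(2Ti)) ∫_𝕋 (φ(σ) − φ(τ))·cot((π/T)ρ(σ − τ))·ρ dσ acting on functions on the unit circle, one has 𝒞^ρ[τ^m] = 0 for all integers m ≥ 0. -/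
open Complex Real

/-- The Cauchy-type layer potential operator `𝒞^ρ` with cotangent kernel:
`(𝒞^ρ φ)(τ) = (1/(2Ti)) ∮_{|σ|=1} (φ(σ) − φ(τ)) cot((π/T)ρ(σ − τ)) ρ dσ`. -/
noncomputable def cauchyCrho (T ρ : ℝ) (φ : ℂ → ℂ) (τ : ℂ) : ℂ :=
  (1 / (2 * (T : ℂ) * Complex.I)) *
    ∮ σ in C(0, 1), (φ σ - φ τ) * ccot (((π : ℂ) / T) * ρ * (σ - τ)) * ρ

/-!
The integrand `(φ σ - φ τ) cot (c (σ - τ))` is the quotient `F / G` of the entire functions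
`F σ = (φ σ - φ τ) cos (c (σ - τ))` and `G σ = sin (c (σ - τ))`, which both vanish at `τ`.
Since `2 R |c| < π`, the only zero of `G` on a disc slightly larger than the disc of radius `R`
bounded by the contour is the simple zero `τ`, so off `τ` the integrand coincides with `dslope F τ / dslope G τ`, which is
holomorphic on that disc. Changing the integrand at the single point `τ` of the contour does not
change the integral, and Cauchy's theorem gives `0`.
-/

open Metric Set Filter Topology

theorem Complex.sin_ne_zero_of_norm_lt_pi {w : ℂ} (hw0 : w ≠ 0) (hw : ‖w‖ < π) : sin w ≠ 0 := by
  refine Complex.sin_ne_zero_iff.2 fun k hk => ?_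
  have hk0 : k ≠ 0 := by rintro rfl; simp_all
  have hk1 : (1 : ℝ) ≤ |(k : ℝ)| := by exact_mod_cast Int.one_le_abs hk0
  have : ‖w‖ = |(k : ℝ)| * π := by
    rw [hk, norm_mul, norm_intCast, Complex.norm_real, Real.norm_of_nonneg pi_pos.le]
  nlinarith [pi_pos]

theorem circleIntegral.integral_congr_of_eqOn_compl_singleton {E : Type*}
    [NormedAddCommGroup E] [NormedSpace ℂ E] {f g : ℂ → E} {c w : ℂ} {R : ℝ}
    (h : EqOn f g {w}ᶜ) : (∮ z in C(c, R), f z) = ∮ z in C(c, R), g z := by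
  rcases eq_or_ne R 0 with rfl | hR
  · simp only [circleIntegral.integral_radius_zero]
  have hw : (circleMap c R ⁻¹' {w}).Countable := (countable_singleton w).preimage_circleMap c hR
  refine intervalIntegral.integral_congr_ae ((hw.ae_notMem _).mono fun θ hθ _ => ?_)
  simp only [h hθ]

theorem eqOn_div_dslope_div_dslope {F G : ℂ → ℂ} {w : ℂ} (hF : F w = 0) (hG : G w = 0) :
    EqOn (fun z => F z / G z) (fun z => dslope F w z / dslope G w z) {w}ᶜ := by
  intro z hz
  simp only [dslope_of_ne _ hz, slope_def_field, hF, hG, sub_zero]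
  rw [div_div_div_cancel_right₀ (sub_ne_zero.2 hz)]

theorem differentiableOn_dslope_div_dslope {F G : ℂ → ℂ} {U : Set ℂ} {w : ℂ} (hU : U ∈ 𝓝 w)
    (hF : DifferentiableOn ℂ F U) (hG : DifferentiableOn ℂ G U) (hGw : G w = 0)
    (hG0 : ∀ z ∈ U, z ≠ w → G z ≠ 0) (hG' : deriv G w ≠ 0) :
    DifferentiableOn ℂ (fun z => dslope F w z / dslope G w z) U := by
  refine ((differentiableOn_dslope hU).2 hF).div ((differentiableOn_dslope hU).2 hG) fun z hz => ?_
  rcases eq_or_ne z w with rfl | hzw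
  · rwa [dslope_same]
  · rw [dslope_of_ne _ hzw, slope_def_field, hGw, sub_zero]
    exact div_ne_zero (hG0 z hz hzw) (sub_ne_zero.2 hzw)

theorem circleIntegral_sub_mul_ccot_eq_zero {φ : ℂ → ℂ} (hφ : Differentiable ℂ φ) {c a τ : ℂ}
    {R : ℝ} (hc : c ≠ 0) (hτ : τ ∈ closedBall a R) (hcR : 2 * R * ‖c‖ < π) :
    (∮ σ in C(a, R), (φ σ - φ τ) * ccot (c * (σ - τ))) = 0 := by
  have hR : 0 ≤ R := dist_nonneg.trans hτ
  have hc' : 0 < ‖c‖ := norm_pos_iff.2 hc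
  set R' := π / ‖c‖ - R
  have hRR' : R < R' := by rw [lt_sub_iff_add_lt, lt_div_iff₀ hc']; linarith
  set F : ℂ → ℂ := fun σ => (φ σ - φ τ) * cos (c * (σ - τ))
  set G : ℂ → ℂ := fun σ => sin (c * (σ - τ))
  have hF : Differentiable ℂ F := by fun_prop
  have hG : HasDerivAt G c τ := by
    simpa using ((hasDerivAt_id τ).sub_const τ |>.const_mul c).csin
  have hG0 : ∀ z ∈ ball a R', z ≠ τ → G z ≠ 0 := by
    intro z hz hzτ
    refine Complex.sin_ne_zero_of_norm_lt_pi (mul_ne_zero hc (sub_ne_zero.2 hzτ)) ?_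
    have : ‖z - τ‖ < π / ‖c‖ := by
      have := dist_triangle_right z τ a
      rw [mem_ball] at hz; rw [mem_closedBall] at hτ
      rw [← dist_eq_norm]; linarith
    rw [norm_mul]
    calc ‖c‖ * ‖z - τ‖ < ‖c‖ * (π / ‖c‖) := by gcongr
      _ = π := mul_div_cancel₀ _ hc'.ne'
  have hdiff := differentiableOn_dslope_div_dslope
    (isOpen_ball.mem_nhds (closedBall_subset_ball hRR' hτ)) hF.differentiableOn (by fun_prop : Differentiable ℂ G).differentiableOn (by simp [G]) hG0
    (hG.deriv ▸ hc)
  calc (∮ σ in C(a, R), (φ σ - φ τ) * ccot (c * (σ - τ)))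
      = ∮ σ in C(a, R), F σ / G σ := by simp only [F, G, ccot, mul_div_assoc]
    _ = ∮ σ in C(a, R), dslope F τ σ / dslope G τ σ :=
      circleIntegral.integral_congr_of_eqOn_compl_singleton
        (eqOn_div_dslope_div_dslope (by simp [F]) (by simp [G]))
    _ = 0 := circleIntegral_eq_zero_of_differentiable_on_off_countable hR countable_empty
      (hdiff.continuousOn.mono (closedBall_subset_ball hRR'))
      fun z hz => hdiff.differentiableAt (isOpen_ball.mem_nhds (ball_subset_ball hRR'.le hz.1))

/-- `𝒞^ρ` annihilates the monomials `τ^m` for `m ≥ 0`. -/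
theorem cauchyCrho_of_nonneg_monomial (T ρ : ℝ) (hT : 0 < T) (hρ0 : 0 < |ρ|)
    (hρT : |ρ| < T / 2) (m : ℕ) (τ : ℂ) (hτ : ‖τ‖ = 1) :
    cauchyCrho T ρ (fun σ => σ ^ m) τ = 0 := by
  have hc : (π : ℂ) / T * ρ ≠ 0 := mul_ne_zero
    (div_ne_zero (ofReal_ne_zero.2 pi_ne_zero) (ofReal_ne_zero.2 hT.ne'))
    (ofReal_ne_zero.2 (abs_pos.1 hρ0))
  have hcR : 2 * 1 * ‖(π : ℂ) / T * ρ‖ < π := by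
    rw [norm_mul, norm_div, Complex.norm_real, Complex.norm_real, Complex.norm_real,
      Real.norm_of_nonneg pi_pos.le, Real.norm_of_nonneg hT.le, Real.norm_eq_abs]
    rw [div_mul_eq_mul_div, mul_div_assoc', div_lt_iff₀ hT]
    nlinarith [pi_pos]
  have hτ' : τ ∈ closedBall (0 : ℂ) 1 := by simp [hτ]
  have h := circleIntegral_sub_mul_ccot_eq_zero (differentiable_pow m) hc hτ' hcR
  have hρ : (∮ σ in C(0, 1), (σ ^ m - τ ^ m) * ccot (π / T * ρ * (σ - τ)) * ρ) =
      (∮ σ in C(0, 1), (σ ^ m - τ ^ m) * ccot (π / T * ρ * (σ - τ))) * ρ :=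
    circleIntegral.integral_smul_const _ _ _ _
  rw [cauchyCrho, hρ, h, zero_mul, mul_zero]
end
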